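/- A pointed regular category C is subtractive if and only if it is 2-star-permutable with respect to the ideal N of zero morphisms, i.e. Eq(f) Eq(g)* = Eq(g) Eq(f)* for every pair of regular epimorphisms f and g of C with the same domain, where for a regular epimorphism h: X → Z the star Eq(h)* is the star relation (0, ker(h)): Ker(h) ⇉ X determined by the kernel of h. -/

import Mathlib

/-!
The argument chases generalised elements: membership in a relation descends along regular
epimorphisms, and an element of a composite `σρ` is, after a regular-epi cover, a composite of
an element of `ρ` and an element of `σ`.

If the category is subtractive, then for `(0, b) ∈ Eq(g)*` and `(b, c) ∈ Eq(f)` the difference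
`t = c - b` satisfies `f t = 0` and `g t = g c`, so `(0, t) ∈ Eq(f)*`, `(t, c) ∈ Eq(g)` and
`(0, c) ∈ Eq(g) Eq(f)*`; this gives `Eq(f) Eq(g)* ≤ Eq(g) Eq(f)*`, and symmetry gives equality.
Conversely, for a reflexive left punctual relation `ρ` one applies the condition to the split
epimorphisms `ρ.p1` and `ρ.p2`.
-/

open CategoryTheory CategoryTheory.Limits

universe v u

namespace Paper

variable {𝒞 : Type u} [Category.{v} 𝒞]

/-- `f` is a regular epimorphism: it is a coequaliser of some pair of morphisms. -/
def IsRegEpi {X Y : 𝒞} (f : X ⟶ Y) : Prop :=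
  ∃ (Z : 𝒞) (a b : Z ⟶ X), a ≫ f = b ≫ f ∧
    ∀ {T : 𝒞} (h : X ⟶ T), a ≫ h = b ≫ h → ∃! u : Y ⟶ T, f ≫ u = h

/-- Regular epimorphisms are pullback-stable. -/
def RegEpisStable (𝒞 : Type u) [Category.{v} 𝒞] : Prop :=
  ∀ {P X Y Z : 𝒞} (p₁ : P ⟶ X) (p₂ : P ⟶ Y) (f : X ⟶ Z) (g : Y ⟶ Z),
    IsPullback p₁ p₂ f g → IsRegEpi g → IsRegEpi p₁

/-- Every kernel pair admits a coequaliser. -/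
def KernelPairsHaveCoequalisers (𝒞 : Type u) [Category.{v} 𝒞] : Prop :=
  ∀ {R X Y : 𝒞} (f : X ⟶ Y) (a b : R ⟶ X), IsKernelPair f a b →
    ∃ (Q : 𝒞) (q : X ⟶ Q), a ≫ q = b ≫ q ∧
      ∀ {T : 𝒞} (h : X ⟶ T), a ≫ h = b ≫ h → ∃! u : Q ⟶ T, q ≫ u = h

/-- A relation from `X` to `Y`: a jointly monomorphic span. -/
structure Rel (𝒞 : Type u) [Category.{v} 𝒞] (X Y : 𝒞) where
  R : 𝒞
  p1 : R ⟶ X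
  p2 : R ⟶ Y
  jm : ∀ {Z : 𝒞} (a b : Z ⟶ R), a ≫ p1 = b ≫ p1 → a ≫ p2 = b ≫ p2 → a = b

variable {X Y Z : 𝒞}

/-- `ρ` is a subrelation of `σ`. -/
def Rel.le (ρ σ : Rel 𝒞 X Y) : Prop :=
  ∃ j : ρ.R ⟶ σ.R, j ≫ σ.p1 = ρ.p1 ∧ j ≫ σ.p2 = ρ.p2

/-- `ρ` and `σ` are the same relation (isomorphic as subobjects of `X × Y`). -/
def Rel.equiv (ρ σ : Rel 𝒞 X Y) : Prop := ρ.le σ ∧ σ.le ρ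

/-- The opposite relation. -/
def Rel.op (ρ : Rel 𝒞 X Y) : Rel 𝒞 Y X :=
  ⟨ρ.R, ρ.p2, ρ.p1, fun a b h2 h1 => ρ.jm a b h1 h2⟩

/-- A morphism viewed as a relation. -/
def homRel (f : X ⟶ Y) : Rel 𝒞 X Y :=
  ⟨X, 𝟙 X, f, fun a b h _ => by simpa using h⟩

/-- The discrete (diagonal) relation on `X`. -/
def diagRel (X : 𝒞) : Rel 𝒞 X X := homRel (𝟙 X)

/-- The kernel pair `Eq(f)` of `f` as a relation on `X`. -/
noncomputable def kerPairRel [HasPullbacks 𝒞] (f : X ⟶ Y) : Rel 𝒞 X X :=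
  ⟨pullback f f, pullback.fst f f, pullback.snd f f,
    fun a b h1 h2 => pullback.hom_ext h1 h2⟩

/-- `τ` is the composite `σρ` (first `ρ` from `X` to `Y`, then `σ` from `Y` to `Z`),
i.e. the (regular epi, jointly mono) factorisation of the span induced on the
pullback of `ρ.p2` and `σ.p1`. -/
def IsRelComp [HasPullbacks 𝒞] (σ : Rel 𝒞 Y Z) (ρ : Rel 𝒞 X Y) (τ : Rel 𝒞 X Z) : Prop :=
  ∃ e : pullback ρ.p2 σ.p1 ⟶ τ.R, IsRegEpi e ∧
    e ≫ τ.p1 = pullback.fst ρ.p2 σ.p1 ≫ ρ.p1 ∧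
    e ≫ τ.p2 = pullback.snd ρ.p2 σ.p1 ≫ σ.p2

def Rel.IsReflexive (ρ : Rel 𝒞 X X) : Prop :=
  ∃ r : X ⟶ ρ.R, r ≫ ρ.p1 = 𝟙 X ∧ r ≫ ρ.p2 = 𝟙 X

def Rel.IsSymmetric (ρ : Rel 𝒞 X X) : Prop :=
  ∃ s : ρ.R ⟶ ρ.R, s ≫ ρ.p1 = ρ.p2 ∧ s ≫ ρ.p2 = ρ.p1

def Rel.IsTransitive [HasPullbacks 𝒞] (ρ : Rel 𝒞 X X) : Prop :=
  ∃ t : pullback ρ.p2 ρ.p1 ⟶ ρ.R,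
    t ≫ ρ.p1 = pullback.fst ρ.p2 ρ.p1 ≫ ρ.p1 ∧
    t ≫ ρ.p2 = pullback.snd ρ.p2 ρ.p1 ≫ ρ.p2

def Rel.IsEquivalence [HasPullbacks 𝒞] (ρ : Rel 𝒞 X X) : Prop :=
  ρ.IsReflexive ∧ ρ.IsSymmetric ∧ ρ.IsTransitive

/-- A finitely complete category is a Mal'tsev category when every reflexive
relation in it is an equivalence relation. -/
def IsMaltsev (𝒞 : Type u) [Category.{v} 𝒞] [HasPullbacks 𝒞] : Prop :=
  ∀ {X : 𝒞} (ρ : Rel 𝒞 X X), ρ.IsReflexive → ρ.IsEquivalence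

/-- A square of type (1): split epimorphisms `f` (with section `s`) and `g`
(with section `t`), regular epimorphisms `c` and `d`, with `f·c = d·g` and
`s·d = c·t`. -/
structure IsSquare1 {A B E D : 𝒞} (f : A ⟶ B) (s : B ⟶ A) (g : E ⟶ D) (t : D ⟶ E)
    (c : E ⟶ A) (d : D ⟶ B) : Prop where
  sec_f : s ≫ f = 𝟙 B
  sec_g : t ≫ g = 𝟙 D
  regepi_c : IsRegEpi c
  regepi_d : IsRegEpi d
  comm1 : c ≫ f = g ≫ d
  comm2 : d ≫ s = t ≫ c

/-- `N` is an ideal of morphisms. -/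
def IsIdeal (N : MorphismProperty 𝒞) : Prop :=
  ∀ {X Y Z : 𝒞} (f : X ⟶ Y) (g : Y ⟶ Z), N f ∨ N g → N (f ≫ g)

/-- `n` is an `N`-kernel of `f`. -/
def IsNKernel (N : MorphismProperty 𝒞) {X Y K : 𝒞} (f : X ⟶ Y) (n : K ⟶ X) : Prop :=
  N (n ≫ f) ∧ ∀ {Z : 𝒞} (m : Z ⟶ X), N (m ≫ f) → ∃! u : Z ⟶ K, u ≫ n = m

/-- Every morphism admits an `N`-kernel. -/
def HasNKernels (N : MorphismProperty 𝒞) : Prop :=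
  ∀ {X Y : 𝒞} (f : X ⟶ Y), ∃ (K : 𝒞) (n : K ⟶ X), IsNKernel N f n

/-- `τ` is the largest star subrelation `ρ*` of the relation `ρ`. -/
def IsLargestStarSub (N : MorphismProperty 𝒞) (ρ τ : Rel 𝒞 X Y) : Prop :=
  τ.le ρ ∧ N τ.p1 ∧ ∀ σ : Rel 𝒞 X Y, σ.le ρ → N σ.p1 → σ.le τ

/-- `(s1, s2)` is the star-kernel of `f`: the universal star coequalised by `f`. -/
def IsStarKernel (N : MorphismProperty 𝒞) {S X Y : 𝒞} (f : X ⟶ Y) (s1 s2 : S ⟶ X) : Prop :=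
  N s1 ∧ s1 ≫ f = s2 ≫ f ∧
    ∀ {T : 𝒞} (t1 t2 : T ⟶ X), N t1 → t1 ≫ f = t2 ≫ f →
      ∃! u : T ⟶ S, u ≫ s1 = t1 ∧ u ≫ s2 = t2

/-- `(ν1, ν2)` is the star of the pullback relation of `(g, δ)`: the universal
pair with `ν1 ∈ N` and `δ·ν1 = g·ν2`. -/
def IsStarPullbackRel (N : MorphismProperty 𝒞) {W E D P : 𝒞} (δ : W ⟶ D) (g : E ⟶ D)
    (ν1 : P ⟶ W) (ν2 : P ⟶ E) : Prop :=
  N ν1 ∧ ν1 ≫ δ = ν2 ≫ g ∧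
    ∀ {T : 𝒞} (t1 : T ⟶ W) (t2 : T ⟶ E), N t1 → t1 ≫ δ = t2 ≫ g →
      ∃! u : T ⟶ P, u ≫ ν1 = t1 ∧ u ≫ ν2 = t2

/-- `f` is a coequaliser of `(s1, s2)`. -/
def IsCoeqOf {S X Y : 𝒞} (f : X ⟶ Y) (s1 s2 : S ⟶ X) : Prop :=
  s1 ≫ f = s2 ≫ f ∧ ∀ {T : 𝒞} (h : X ⟶ T), s1 ≫ h = s2 ≫ h → ∃! u : Y ⟶ T, f ≫ u = h

/-- Star-regularity: every regular epimorphism is a coequaliser of a star. -/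
def StarRegular (𝒞 : Type u) [Category.{v} 𝒞] (N : MorphismProperty 𝒞) : Prop :=
  ∀ {X Y : 𝒞} (f : X ⟶ Y), IsRegEpi f →
    ∃ (S : 𝒞) (s1 s2 : S ⟶ X), N s1 ∧ IsCoeqOf f s1 s2

/-- `f` is saturating: the induced morphism between the `N`-kernels of the
identities is a regular epimorphism. -/
def Saturating (N : MorphismProperty 𝒞) {X Y : 𝒞} (f : X ⟶ Y) : Prop :=
  ∀ {KX KY : 𝒞} (nX : KX ⟶ X) (nY : KY ⟶ Y), IsNKernel N (𝟙 X) nX → IsNKernel N (𝟙 Y) nY →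
    ∀ u : KX ⟶ KY, u ≫ nY = nX ≫ f → IsRegEpi u

/-- `X` is an `N`-trivial object. -/
def NTrivial (N : MorphismProperty 𝒞) (X : 𝒞) : Prop := N (𝟙 X)

/-- The multi-pointed category has enough trivial objects: `N` is a closed ideal and
`N`-trivial objects are closed under subobjects and squares. -/
def EnoughTrivialObjects [HasBinaryProducts 𝒞] (N : MorphismProperty 𝒞) : Prop :=
  (∀ {X Y : 𝒞} (f : X ⟶ Y), N f → ∃ (T : 𝒞) (p : X ⟶ T) (q : T ⟶ Y),
      NTrivial N T ∧ p ≫ q = f) ∧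
  (∀ {S X : 𝒞} (m : S ⟶ X), Mono m → NTrivial N X → NTrivial N S) ∧
  (∀ X : 𝒞, NTrivial N X → NTrivial N (X ⨯ X))

/-- A square of type (1) is a star-regular pushout when `(c g°)* = f° d*`. -/
def IsStarRegularPushout [HasPullbacks 𝒞] (N : MorphismProperty 𝒞) {A B E D : 𝒞}
    (f : A ⟶ B) (g : E ⟶ D) (c : E ⟶ A) (d : D ⟶ B) : Prop :=
  ∀ (ρ τ μ : Rel 𝒞 D A) (ds : Rel 𝒞 D B),
    IsRelComp (homRel c) (Rel.op (homRel g)) ρ → IsLargestStarSub N ρ τ →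
    IsLargestStarSub N (homRel d) ds → IsRelComp (Rel.op (homRel f)) ds μ →
    τ.equiv μ

/-- 2-star-permutability: `Eq(f) Eq(g)* = Eq(g) Eq(f)*` for all regular
epimorphisms `f`, `g` with the same domain. -/
def TwoStarPermutable (𝒞 : Type u) [Category.{v} 𝒞] [HasPullbacks 𝒞]
    (N : MorphismProperty 𝒞) : Prop :=
  ∀ {X Y Z : 𝒞} (f : X ⟶ Y) (g : X ⟶ Z), IsRegEpi f → IsRegEpi g →
    ∀ (sf sg : Rel 𝒞 X X), IsLargestStarSub N (kerPairRel f) sf →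
      IsLargestStarSub N (kerPairRel g) sg →
    ∀ (τ₁ τ₂ : Rel 𝒞 X X), IsRelComp (kerPairRel f) sg τ₁ →
      IsRelComp (kerPairRel g) sf τ₂ → τ₁.equiv τ₂

section Pointed

variable [HasZeroMorphisms 𝒞]

/-- `k` is a kernel of `f`. -/
def IsKernelOf {K X Y : 𝒞} (k : K ⟶ X) (f : X ⟶ Y) : Prop :=
  k ≫ f = 0 ∧ ∀ {Z : 𝒞} (m : Z ⟶ X), m ≫ f = 0 → ∃! u : Z ⟶ K, u ≫ k = m

/-- `f` is a cokernel of `k`. -/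
def IsCokernelOf {X Y K : 𝒞} (f : X ⟶ Y) (k : K ⟶ X) : Prop :=
  k ≫ f = 0 ∧ ∀ {T : 𝒞} (h : X ⟶ T), k ≫ h = 0 → ∃! u : Y ⟶ T, f ≫ u = h

/-- Short exact sequence `K → X ↠ Y`. -/
def IsShortExact {K X Y : 𝒞} (k : K ⟶ X) (f : X ⟶ Y) : Prop :=
  IsKernelOf k f ∧ IsCokernelOf f k

/-- Subtractivity: every reflexive, left punctual relation is right punctual. -/
def IsSubtractive (𝒞 : Type u) [Category.{v} 𝒞] [HasZeroMorphisms 𝒞] : Prop :=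
  ∀ {X : 𝒞} (ρ : Rel 𝒞 X X), ρ.IsReflexive →
    (∃ l : X ⟶ ρ.R, l ≫ ρ.p1 = 𝟙 X ∧ l ≫ ρ.p2 = 0) →
    (∃ r : X ⟶ ρ.R, r ≫ ρ.p1 = 0 ∧ r ≫ ρ.p2 = 𝟙 X)

end Pointed

/-- The star relation `(0, ker g)` on `X` determined by the kernel `k` of `g`. -/
def kerStarRel [HasZeroMorphisms 𝒞] {K X Y : 𝒞} (k : K ⟶ X) {g : X ⟶ Y}
    (h : IsKernelOf k g) : Rel 𝒞 X X :=
  ⟨K, 0, k, fun a b _ hab => by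
    obtain ⟨u, -, huniq⟩ := h.2 (a ≫ k) (by rw [Category.assoc, h.1, comp_zero])
    rw [huniq a rfl, huniq b hab.symm]⟩

lemma IsRegEpi.epi {f : X ⟶ Y} (hf : IsRegEpi f) : Epi f := by
  obtain ⟨W, a, b, hab, huniv⟩ := hf
  refine ⟨fun u v h => ?_⟩
  obtain ⟨w, -, hw⟩ := huniv (f ≫ u) (by simp only [← Category.assoc, hab])
  exact (hw u rfl).trans (hw v h.symm).symm

lemma isRegEpi_of_comp_eq_id {f : X ⟶ Y} (s : Y ⟶ X) (hs : s ≫ f = 𝟙 Y) : IsRegEpi f :=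
  ⟨X, f ≫ s, 𝟙 X, by simp [hs], fun h hh =>
    ⟨s ≫ h, by simpa using hh, fun u hu => by rw [← hu, ← Category.assoc, hs, Category.id_comp]⟩⟩

lemma RegEpisStable.exists_cover [HasPullbacks 𝒞] (hstab : RegEpisStable 𝒞) {A B T : 𝒞}
    {e : A ⟶ B} (he : IsRegEpi e) (j : T ⟶ B) :
    ∃ (T' : 𝒞) (c : T' ⟶ T) (w : T' ⟶ A), IsRegEpi c ∧ c ≫ j = w ≫ e :=
  ⟨pullback j e, pullback.fst j e, pullback.snd j e,
    hstab _ _ _ _ (IsPullback.of_hasPullback j e) he, pullback.condition⟩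

namespace Rel

def Mem (ρ : Rel 𝒞 X Y) {T : 𝒞} (a : T ⟶ X) (b : T ⟶ Y) : Prop :=
  ∃ j : T ⟶ ρ.R, j ≫ ρ.p1 = a ∧ j ≫ ρ.p2 = b

variable {ρ σ : Rel 𝒞 X Y} {T : 𝒞} {a : T ⟶ X} {b : T ⟶ Y}

lemma Mem.comp (h : ρ.Mem a b) {T' : 𝒞} (t : T' ⟶ T) : ρ.Mem (t ≫ a) (t ≫ b) := by
  obtain ⟨j, rfl, rfl⟩ := h
  exact ⟨t ≫ j, Category.assoc _ _ _, Category.assoc _ _ _⟩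

lemma Mem.of_le (h : ρ.Mem a b) (hle : ρ.le σ) : σ.Mem a b := by
  obtain ⟨j, rfl, rfl⟩ := h
  obtain ⟨k, hk₁, hk₂⟩ := hle
  exact ⟨j ≫ k, by rw [Category.assoc, hk₁], by rw [Category.assoc, hk₂]⟩

/-- Regular epimorphisms are orthogonal to the jointly monic span of a relation. -/
lemma mem_of_isRegEpi_comp {T' : 𝒞} {c : T' ⟶ T} (hc : IsRegEpi c)
    (h : ρ.Mem (c ≫ a) (c ≫ b)) : ρ.Mem a b := by
  obtain ⟨j, hj₁, hj₂⟩ := h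
  obtain ⟨W, u, v, huv, huniv⟩ := id hc
  have := hc.epi
  have hj : u ≫ j = v ≫ j := ρ.jm _ _
    (by simp only [Category.assoc, hj₁, reassoc_of% huv])
    (by simp only [Category.assoc, hj₂, reassoc_of% huv])
  obtain ⟨k, hk, -⟩ := huniv j hj
  exact ⟨k, (cancel_epi c).1 (by rw [reassoc_of% hk, hj₁]),
    (cancel_epi c).1 (by rw [reassoc_of% hk, hj₂])⟩

end Rel

lemma exists_rel_factorisation [HasPullbacks 𝒞] [HasBinaryProducts 𝒞]
    (hcoeq : KernelPairsHaveCoequalisers 𝒞) (hstab : RegEpisStable 𝒞) {A : 𝒞}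
    (a : A ⟶ X) (b : A ⟶ Y) :
    ∃ (ρ : Rel 𝒞 X Y) (e : A ⟶ ρ.R), IsRegEpi e ∧ e ≫ ρ.p1 = a ∧ e ≫ ρ.p2 = b := by
  obtain ⟨Q, q, hq, huniv⟩ := hcoeq (prod.lift a b) _ _ (IsPullback.of_hasPullback _ _)
  have hq' : IsRegEpi q := ⟨_, _, _, hq, huniv⟩
  obtain ⟨m, hm, -⟩ := huniv (prod.lift a b) pullback.condition
  have hmono : ∀ {T : 𝒞} (u v : T ⟶ Q), u ≫ m = v ≫ m → u = v := by
    intro T u v huv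
    obtain ⟨T₁, c₁, u₁, hc₁, hu₁⟩ := hstab.exists_cover hq' u
    obtain ⟨T₂, c₂, v₂, hc₂, hv₂⟩ := hstab.exists_cover hq' (c₁ ≫ v)
    have hker : (c₂ ≫ u₁) ≫ prod.lift a b = v₂ ≫ prod.lift a b := by
      rw [← hm, Category.assoc, reassoc_of% hu₁.symm, reassoc_of% hv₂.symm, huv]
    have hlift := pullback.lift _ _ hker ≫= hq
    simp only [pullback.lift_fst_assoc, pullback.lift_snd_assoc] at hlift
    have := hc₁.epi
    have := hc₂.epi
    refine (cancel_epi (c₂ ≫ c₁)).1 ?_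
    simpa only [Category.assoc, hu₁, hv₂] using hlift
  refine ⟨⟨Q, m ≫ prod.fst, m ≫ prod.snd, fun u v h₁ h₂ => hmono u v ?_⟩, q, hq', ?_, ?_⟩
  · ext <;> simpa using ‹_›
  · rw [← Category.assoc, hm]; exact prod.lift_fst _ _
  · rw [← Category.assoc, hm]; exact prod.lift_snd _ _

section Composite

variable [HasPullbacks 𝒞] {σ : Rel 𝒞 Y Z} {ρ : Rel 𝒞 X Y} {τ : Rel 𝒞 X Z}

lemma exists_isRelComp [HasBinaryProducts 𝒞] (hcoeq : KernelPairsHaveCoequalisers 𝒞)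
    (hstab : RegEpisStable 𝒞) (σ : Rel 𝒞 Y Z) (ρ : Rel 𝒞 X Y) : ∃ τ, IsRelComp σ ρ τ :=
  exists_rel_factorisation hcoeq hstab _ _

lemma IsRelComp.mem (h : IsRelComp σ ρ τ) {T : 𝒞} {a : T ⟶ X} {b : T ⟶ Y} {c : T ⟶ Z}
    (hab : ρ.Mem a b) (hbc : σ.Mem b c) : τ.Mem a c := by
  obtain ⟨e, -, he₁, he₂⟩ := h
  obtain ⟨j, rfl, hj₂⟩ := hab
  obtain ⟨k, hk₁, rfl⟩ := hbc
  exact ⟨pullback.lift j k (hj₂.trans hk₁.symm) ≫ e, by simp [he₁, pullback.lift_fst_assoc],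
    by simp [he₂, pullback.lift_snd_assoc]⟩

lemma IsRelComp.le_of_forall_mem (h : IsRelComp σ ρ τ) {μ : Rel 𝒞 X Z}
    (H : ∀ {T : 𝒞} (a : T ⟶ X) (b : T ⟶ Y) (c : T ⟶ Z), ρ.Mem a b → σ.Mem b c → μ.Mem a c) :
    τ.le μ := by
  obtain ⟨e, he, he₁, he₂⟩ := h
  show μ.Mem τ.p1 τ.p2
  refine Rel.mem_of_isRegEpi_comp he ?_
  rw [he₁, he₂]
  exact H _ (pullback.fst _ _ ≫ ρ.p2) _ ⟨_, rfl, rfl⟩ ⟨_, pullback.condition.symm, rfl⟩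

lemma IsRelComp.exists_cover_of_mem (hstab : RegEpisStable 𝒞) (h : IsRelComp σ ρ τ)
    {T : 𝒞} {a : T ⟶ X} {c : T ⟶ Z} (hac : τ.Mem a c) :
    ∃ (T' : 𝒞) (d : T' ⟶ T) (b : T' ⟶ Y), IsRegEpi d ∧ ρ.Mem (d ≫ a) b ∧ σ.Mem b (d ≫ c) := by
  obtain ⟨e, he, he₁, he₂⟩ := h
  obtain ⟨j, rfl, rfl⟩ := hac
  obtain ⟨T', d, w, hd, hw⟩ := hstab.exists_cover he j
  refine ⟨T', d, w ≫ pullback.fst _ _ ≫ ρ.p2, hd, ⟨w ≫ pullback.fst _ _, ?_, ?_⟩,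
    ⟨w ≫ pullback.snd _ _, ?_, ?_⟩⟩
  · simp [reassoc_of% hw, he₁]
  · simp
  · simp [pullback.condition]
  · simp [reassoc_of% hw, he₂]

lemma mem_kerPairRel_iff (f : X ⟶ Y) {T : 𝒞} {a b : T ⟶ X} :
    (kerPairRel f).Mem a b ↔ a ≫ f = b ≫ f := by
  refine ⟨fun ⟨j, h₁, h₂⟩ => ?_, fun h =>
    ⟨pullback.lift a b h, pullback.lift_fst _ _ _, pullback.lift_snd _ _ _⟩⟩
  rw [← h₁, ← h₂, Category.assoc, Category.assoc]
  exact j ≫= pullback.condition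

end Composite

section Kernels

variable [HasZeroMorphisms 𝒞] {T : 𝒞} {a b : T ⟶ X}

lemma mem_kerStarRel_iff {K : 𝒞} {k : K ⟶ X} {g : X ⟶ Y} (hk : IsKernelOf k g) :
    (kerStarRel k hk).Mem a b ↔ a = 0 ∧ b ≫ g = 0 := by
  refine ⟨fun ⟨j, h₁, h₂⟩ => ⟨h₁.symm.trans comp_zero, ?_⟩, fun ⟨ha, hb⟩ => ?_⟩
  · rw [← h₂]
    exact (Category.assoc _ _ _).trans ((j ≫= hk.1).trans comp_zero)
  · obtain ⟨u, hu, -⟩ := hk.2 b hb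
    exact ⟨u, ha ▸ comp_zero, hu⟩

lemma isKernelOf_kernelι (h : X ⟶ Y) [HasKernel h] : IsKernelOf (kernel.ι h) h :=
  ⟨kernel.condition h, fun m hm => ⟨kernel.lift h m hm, kernel.lift_ι _ _ _,
    fun u hu => by rw [← cancel_mono (kernel.ι h), hu, kernel.lift_ι]⟩⟩

end Kernels

section Subtractive

variable [HasZeroMorphisms 𝒞] [HasPullbacks 𝒞]

/-- The difference `t = x - y` is the right punctuality witness of the relation
`{(a, b) | ∃ s, θ₁ s = θ₁ x a ∧ θ₂ s = θ₂ x b}` on `T`, which is reflexive (take `s = x`)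
and left punctual (take `s = y`). -/
lemma IsSubtractive.exists_difference [HasBinaryProducts 𝒞] (hsub : IsSubtractive 𝒞)
    (hcoeq : KernelPairsHaveCoequalisers 𝒞) (hstab : RegEpisStable 𝒞)
    {S U V T : 𝒞} (θ₁ : S ⟶ U) (θ₂ : S ⟶ V) {x y : T ⟶ S}
    (h₁ : x ≫ θ₁ = y ≫ θ₁) (h₂ : y ≫ θ₂ = 0) :
    ∃ (T' : 𝒞) (c : T' ⟶ T) (t : T' ⟶ S),
      IsRegEpi c ∧ t ≫ θ₁ = 0 ∧ t ≫ θ₂ = c ≫ x ≫ θ₂ := by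
  obtain ⟨ρ, e, he, he₁, he₂⟩ := exists_rel_factorisation hcoeq hstab
    (pullback.fst (pullback.fst θ₁ (x ≫ θ₁) ≫ θ₂) (x ≫ θ₂) ≫ pullback.snd θ₁ (x ≫ θ₁))
    (pullback.snd (pullback.fst θ₁ (x ≫ θ₁) ≫ θ₂) (x ≫ θ₂))
  have hmem : ∀ (s : T ⟶ S) (a b : T ⟶ T),
      s ≫ θ₁ = a ≫ x ≫ θ₁ → s ≫ θ₂ = b ≫ x ≫ θ₂ → ρ.Mem a b := by
    intro s a b hs₁ hs₂
    refine ⟨pullback.lift (pullback.lift s a hs₁) b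
      (by rw [pullback.lift_fst_assoc, hs₂]) ≫ e, ?_, ?_⟩
    · simp only [Category.assoc, he₁, pullback.lift_fst_assoc, pullback.lift_snd]
    · simp only [Category.assoc, he₂, pullback.lift_snd]
  obtain ⟨r, hr₁, hr₂⟩ := hsub ρ (hmem x (𝟙 T) (𝟙 T) (by simp) (by simp))
    (hmem y (𝟙 T) 0 (by simp [h₁]) (by simp [h₂]))
  obtain ⟨T', c, w, hc, hw⟩ := hstab.exists_cover he r
  have hw₁ : w ≫ pullback.fst _ _ ≫ pullback.snd θ₁ (x ≫ θ₁) = 0 := by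
    rw [← he₁, ← reassoc_of% hw, hr₁, comp_zero]
  have hw₂ : w ≫ pullback.snd (pullback.fst θ₁ (x ≫ θ₁) ≫ θ₂) (x ≫ θ₂) = c := by
    rw [← he₂, ← reassoc_of% hw, hr₂, Category.comp_id]
  refine ⟨T', c, w ≫ pullback.fst _ _ ≫ pullback.fst _ _, hc, ?_, ?_⟩
  · simp only [Category.assoc, pullback.condition]
    rw [reassoc_of% hw₁, zero_comp]
  · simp only [Category.assoc, pullback.condition]
    rw [reassoc_of% hw₂]

lemma IsSubtractive.le_of_isRelComp_kerStarRel [HasBinaryProducts 𝒞] (hsub : IsSubtractive 𝒞)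
    (hcoeq : KernelPairsHaveCoequalisers 𝒞) (hstab : RegEpisStable 𝒞)
    {Kf Kg : 𝒞} {f : X ⟶ Y} {g : X ⟶ Z} {kf : Kf ⟶ X} {kg : Kg ⟶ X}
    (hkf : IsKernelOf kf f) (hkg : IsKernelOf kg g) {τ₁ τ₂ : Rel 𝒞 X X}
    (h₁ : IsRelComp (kerPairRel f) (kerStarRel kg hkg) τ₁)
    (h₂ : IsRelComp (kerPairRel g) (kerStarRel kf hkf) τ₂) : τ₁.le τ₂ := by
  refine h₁.le_of_forall_mem fun a b c hab hbc => ?_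
  obtain ⟨rfl, hb⟩ := (mem_kerStarRel_iff hkg).1 hab
  obtain ⟨T', d, t, hd, ht₁, ht₂⟩ :=
    hsub.exists_difference hcoeq hstab f g ((mem_kerPairRel_iff f).1 hbc).symm hb
  refine Rel.mem_of_isRegEpi_comp hd ?_
  rw [comp_zero]
  exact h₂.mem ((mem_kerStarRel_iff hkf).2 ⟨rfl, ht₁⟩)
    ((mem_kerPairRel_iff g).2 (ht₂.trans (Category.assoc _ _ _).symm))

/-- Left punctuality puts `(0, 1)` in `Eq(ρ.p1) Eq(ρ.p2)*`, through the middle element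
`l ρ.p1` where `l` is the left punctuality witness; right punctuality is then read off from
`(0, r) ∈ Eq(ρ.p2) Eq(ρ.p1)*` for the reflexivity witness `r`. -/
lemma Rel.mem_zero_id_of_isRelComp_le (hstab : RegEpisStable 𝒞) (ρ : Rel 𝒞 X X)
    (hrefl : ρ.IsReflexive) (hleft : ρ.Mem (𝟙 X) 0) {K₁ K₂ : 𝒞} {k₁ : K₁ ⟶ ρ.R}
    {k₂ : K₂ ⟶ ρ.R} (hk₁ : IsKernelOf k₁ ρ.p1) (hk₂ : IsKernelOf k₂ ρ.p2)
    {τ₁ τ₂ : Rel 𝒞 ρ.R ρ.R} (h₁ : IsRelComp (kerPairRel ρ.p1) (kerStarRel k₂ hk₂) τ₁)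
    (h₂ : IsRelComp (kerPairRel ρ.p2) (kerStarRel k₁ hk₁) τ₂) (hle : τ₁.le τ₂) :
    ρ.Mem 0 (𝟙 X) := by
  obtain ⟨r, -, hr₂⟩ := hrefl
  obtain ⟨l, hl₁, hl₂⟩ := hleft
  have hτ₁ : τ₁.Mem 0 (𝟙 ρ.R) := h₁.mem (b := ρ.p1 ≫ l)
    ((mem_kerStarRel_iff hk₂).2 ⟨rfl, by rw [Category.assoc, hl₂, comp_zero]⟩)
    ((mem_kerPairRel_iff _).2 (by rw [Category.assoc, hl₁, Category.comp_id, Category.id_comp]))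
  obtain ⟨T, d, b, hd, hb, hbr⟩ := h₂.exists_cover_of_mem hstab ((hτ₁.of_le hle).comp r)
  obtain ⟨-, hb₁⟩ := (mem_kerStarRel_iff hk₁).1 hb
  have hb₂ : b ≫ ρ.p2 = d := by
    rw [(mem_kerPairRel_iff _).1 hbr, Category.comp_id, Category.assoc, hr₂, Category.comp_id]
  exact Rel.mem_of_isRegEpi_comp hd ⟨b, by rw [hb₁, comp_zero], by rw [hb₂, Category.comp_id]⟩

end Subtractive

theorem statement17_general [HasZeroMorphisms 𝒞] [HasFiniteLimits 𝒞]
    (hcoeq : KernelPairsHaveCoequalisers 𝒞) (hstab : RegEpisStable 𝒞) :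
    IsSubtractive 𝒞 ↔
      ∀ {X Y Z : 𝒞} (f : X ⟶ Y) (g : X ⟶ Z), IsRegEpi f → IsRegEpi g →
        ∀ {Kf Kg : 𝒞} (kf : Kf ⟶ X) (kg : Kg ⟶ X)
          (hkf : IsKernelOf kf f) (hkg : IsKernelOf kg g),
        ∀ (τ₁ τ₂ : Rel 𝒞 X X),
          IsRelComp (kerPairRel f) (kerStarRel kg hkg) τ₁ →
          IsRelComp (kerPairRel g) (kerStarRel kf hkf) τ₂ → τ₁.equiv τ₂ := by
  refine ⟨fun hsub _ _ _ _ _ _ _ _ _ _ _ hkf hkg _ _ h₁ h₂ =>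
    ⟨hsub.le_of_isRelComp_kerStarRel hcoeq hstab hkf hkg h₁ h₂,
      hsub.le_of_isRelComp_kerStarRel hcoeq hstab hkg hkf h₂ h₁⟩, fun H X ρ hrefl hleft => ?_⟩
  obtain ⟨r, hr₁, hr₂⟩ := id hrefl
  have hk₁ := isKernelOf_kernelι ρ.p1
  have hk₂ := isKernelOf_kernelι ρ.p2
  obtain ⟨τ₁, h₁⟩ := exists_isRelComp hcoeq hstab (kerPairRel ρ.p1) (kerStarRel _ hk₂)
  obtain ⟨τ₂, h₂⟩ := exists_isRelComp hcoeq hstab (kerPairRel ρ.p2) (kerStarRel _ hk₁)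
  exact ρ.mem_zero_id_of_isRelComp_le hstab hrefl hleft hk₁ hk₂ h₁ h₂
    (H _ _ (isRegEpi_of_comp_eq_id r hr₁) (isRegEpi_of_comp_eq_id r hr₂) _ _ hk₁ hk₂ τ₁ τ₂
      h₁ h₂).1

/-- A pointed regular category is subtractive iff it is
2-star-permutable with respect to the ideal of zero morphisms:
`Eq(f) Eq(g)* = Eq(g) Eq(f)*` for all regular epimorphisms `f`, `g` with the same
domain, where `Eq(h)* = (0, ker h)`. -/
theorem statement17 [HasZeroObject 𝒞] [HasZeroMorphisms 𝒞] [HasFiniteLimits 𝒞]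
    (hcoeq : KernelPairsHaveCoequalisers 𝒞) (hstab : RegEpisStable 𝒞) :
    IsSubtractive 𝒞 ↔
      ∀ {X Y Z : 𝒞} (f : X ⟶ Y) (g : X ⟶ Z), IsRegEpi f → IsRegEpi g →
        ∀ {Kf Kg : 𝒞} (kf : Kf ⟶ X) (kg : Kg ⟶ X)
          (hkf : IsKernelOf kf f) (hkg : IsKernelOf kg g),
        ∀ (τ₁ τ₂ : Rel 𝒞 X X),
          IsRelComp (kerPairRel f) (kerStarRel kg hkg) τ₁ →
          IsRelComp (kerPairRel g) (kerStarRel kf hkf) τ₂ → τ₁.equiv τ₂ :=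
  statement17_general hcoeq hstab

end Paper
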